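/- arXiv:1006.0684 — 5 statements merged into one kernel-verified Lean document; each statement's English description precedes it below -/
import Mathlib

section
/- Let G₁,...,G_s : ℝ^s → ℝ be sup-contractive with common contraction constant α < 1. Define F₁(y) = G₁(y_s, y_{s-1}, ..., y₁) and inductively F_k(y) = G_k(F_{k-1}(y),...,F₁(y), y_s, y_{s-1},..., y_k) for 2 ≤ k ≤ s. Then the map F(y) = (F₁(y),...,F_s(y)) is a contraction on ℝ^s with respect to the sup norm. -/
/-!
Each `F_k` is `C`-Lipschitz for the sup norm, with `C = max α 0 ≤ 1`, by strong induction on `k`: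
every argument of `G_k` is either a coordinate of `y` or some `F_j` with `j < k`, hence
`1`-Lipschitz, so the argument vector moves by at most `‖y - z‖` and `G_k` contracts that by `C`.
-/

/-- The recursively-defined components `F_k` (0-indexed: `Fcomp s G k` is `F_{k+1}`):
`F_1(y) = G_1(y_s, ..., y_1)` and
`F_k(y) = G_k(F_{k-1}(y), ..., F_1(y), y_s, y_{s-1}, ..., y_k)`. -/
noncomputable def Fcomp (s : ℕ) (G : Fin s → (Fin s → ℝ) → ℝ) (k : ℕ) (y : Fin s → ℝ) : ℝ :=
  if h : k < s then
    G ⟨k, h⟩ (fun j => if hj : (j : ℕ) < k then Fcomp s G (k - 1 - (j : ℕ)) y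
      else y ⟨s - 1 - ((j : ℕ) - k), by omega⟩)
  else 0
termination_by k
decreasing_by omega

section Fcomp

variable {s : ℕ} {G : Fin s → (Fin s → ℝ) → ℝ} {k : ℕ}

theorem Fcomp_of_lt (hk : k < s) (y : Fin s → ℝ) :
    Fcomp s G k y = G ⟨k, hk⟩ (fun j => if (j : ℕ) < k then Fcomp s G (k - 1 - (j : ℕ)) y
      else y ⟨s - 1 - ((j : ℕ) - k), by omega⟩) := by
  rw [Fcomp, dif_pos hk]
  simp only [dite_eq_ite]

theorem Fcomp_of_le (hk : s ≤ k) (y : Fin s → ℝ) : Fcomp s G k y = 0 := by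
  rw [Fcomp, dif_neg hk.not_gt]

theorem abs_Fcomp_sub_le {C : ℝ} (hC₀ : 0 ≤ C) (hC₁ : C ≤ 1)
    (hG : ∀ i (x y : Fin s → ℝ), |G i x - G i y| ≤ C * ‖x - y‖) (k : ℕ) (y z : Fin s → ℝ) :
    |Fcomp s G k y - Fcomp s G k z| ≤ C * ‖y - z‖ := by
  induction k using Nat.strong_induction_on with
  | _ k ih =>
    rcases lt_or_ge k s with hk | hk
    · rw [Fcomp_of_lt hk, Fcomp_of_lt hk]
      refine (hG _ _ _).trans (mul_le_mul_of_nonneg_left ?_ hC₀)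
      refine (pi_norm_le_iff_of_nonneg (norm_nonneg _)).2 fun j => ?_
      rw [Pi.sub_apply]
      split_ifs with hj
      · rw [Real.norm_eq_abs]
        exact (ih _ (by omega)).trans (mul_le_of_le_one_left (norm_nonneg _) hC₁)
      · exact norm_le_pi_norm (y - z) _
    · simp [Fcomp_of_le hk, mul_nonneg hC₀ (norm_nonneg _)]

end Fcomp

theorem Fcomp_contraction_general (s : ℕ) (α : ℝ) (hα : α < 1)
    (G : Fin s → (Fin s → ℝ) → ℝ)
    (hG : ∀ i (x y : Fin s → ℝ), |G i x - G i y| ≤ α * ‖x - y‖) :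
    ∃ C : ℝ, C < 1 ∧ ∀ y z : Fin s → ℝ,
      ‖(fun k : Fin s => Fcomp s G k y) - (fun k : Fin s => Fcomp s G k z)‖ ≤
        C * ‖y - z‖ := by
  have hG' : ∀ i (x y : Fin s → ℝ), |G i x - G i y| ≤ max α 0 * ‖x - y‖ := fun i x y =>
    (hG i x y).trans (mul_le_mul_of_nonneg_right (le_max_left _ _) (norm_nonneg _))
  refine ⟨max α 0, max_lt hα one_pos, fun y z => ?_⟩
  refine (pi_norm_le_iff_of_nonneg (by positivity)).2 fun k => ?_
  simpa using abs_Fcomp_sub_le (le_max_right α 0) (max_le hα.le zero_le_one) hG' k y z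

theorem Fcomp_contraction (s : ℕ) (hs : 1 ≤ s) (α : ℝ) (hα : α < 1)
    (G : Fin s → (Fin s → ℝ) → ℝ)
    (hG : ∀ i (x y : Fin s → ℝ), |G i x - G i y| ≤ α * ‖x - y‖) :
    ∃ C : ℝ, C < 1 ∧ ∀ y z : Fin s → ℝ,
      ‖(fun k : Fin s => Fcomp s G k y) - (fun k : Fin s => Fcomp s G k z)‖ ≤
        C * ‖y - z‖ :=
  Fcomp_contraction_general s α hα G hG
end

section
/- Let G_n : ℝ^M → ℝ be sup-contractive for each n, with G_{n+P} = G_n for all n. Then for any initial condition (x₁,...,x_M), the sequence defined by x_n = G_n(x_{n-1},...,x_{n-M}) for n > M converges to a unique asymptotically periodic orbit of period P·M, independent of the initial condition. That is, there exists a sequence (x*_n) with x*_{n+PM} = x*_n such that |x_n - x*_n| → 0 as n → ∞, and x* does not depend on the initial condition. -/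
/-! Two solutions of `x n = G n (x (n-1), …, x (n-M))` that are `E`-close on their first `M`
terms are `α ^ (n / M) * E`-close at time `n`, since each block of `M` steps contracts the sup
distance of the last `M` values by `α`. Hence the map sending an initial window to the window
`P * M` steps later is an `α ^ P`-contraction; as `G` is `P`-periodic, the solution started at
its Banach fixed point is `P * M`-periodic, and every solution converges to it. Two periodic
sequences whose difference tends to `0` coincide, which gives uniqueness. -/

open Filter Topology NNReal Function

variable {X : Type*} {M : ℕ}

def IsDelaySolution (G : ℕ → (Fin M → X) → X) (x : ℕ → X) : Prop :=
  ∀ n, M ≤ n → x n = G n (fun i : Fin M => x (n - 1 - (i : ℕ)))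

def delaySolution (G : ℕ → (Fin M → X) → X) (s : Fin M → X) : ℕ → X
  | n => if h : n < M then s ⟨n, h⟩ else G n fun i : Fin M => delaySolution G s (n - 1 - i)
decreasing_by omega

theorem delaySolution_of_lt (G : ℕ → (Fin M → X) → X) (s : Fin M → X) {n : ℕ} (hn : n < M) :
    delaySolution G s n = s ⟨n, hn⟩ := by
  rw [delaySolution, dif_pos hn]

theorem isDelaySolution_delaySolution (G : ℕ → (Fin M → X) → X) (s : Fin M → X) :
    IsDelaySolution G (delaySolution G s) := fun n hn => by
  rw [delaySolution, dif_neg (by omega)]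

namespace IsDelaySolution

variable {G : ℕ → (Fin M → X) → X} {x y : ℕ → X}

theorem ext (hx : IsDelaySolution G x) (hy : IsDelaySolution G y) (h : ∀ m < M, x m = y m) :
    x = y := by
  funext n
  induction n using Nat.strong_induction_on with
  | _ n ih =>
    rcases lt_or_ge n M with hn | hn
    · exact h n hn
    · rw [hx n hn, hy n hn]
      congr 1
      funext i
      exact ih _ (by omega)

theorem shift {T : ℕ} (hG : Periodic G T) (hx : IsDelaySolution G x) :
    IsDelaySolution G (fun n => x (n + T)) := fun n hn => by
  show x (n + T) = G n fun i => x (n - 1 - i + T)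
  rw [hx (n + T) (by omega), hG n]
  congr 1
  funext i
  congr 1
  omega

variable [PseudoMetricSpace X] {K : ℝ≥0}

theorem dist_le_pow_div (hM : 0 < M) (hK : K ≤ 1) (hG : ∀ n, LipschitzWith K (G n))
    (hx : IsDelaySolution G x) (hy : IsDelaySolution G y) {E : ℝ}
    (hE : ∀ m < M, dist (x m) (y m) ≤ E) (n : ℕ) : dist (x n) (y n) ≤ K ^ (n / M) * E := by
  have hE0 : 0 ≤ E := dist_nonneg.trans (hE 0 hM)
  induction n using Nat.strong_induction_on with
  | _ n ih =>
    rcases lt_or_ge n M with hn | hn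
    · simpa only [Nat.div_eq_of_lt hn, pow_zero, one_mul] using hE n hn
    obtain ⟨k, hk⟩ : ∃ k, n / M = k + 1 := Nat.exists_eq_add_one.2 (Nat.div_pos hn hM)
    have hkM : (k + 1) * M ≤ n := hk ▸ Nat.div_mul_le_self n M
    have hwindow : dist (fun i : Fin M => x (n - 1 - i)) (fun i : Fin M => y (n - 1 - i)) ≤
        K ^ k * E := by
      refine (dist_pi_le_iff (by positivity)).2 fun i => (ih _ (by omega)).trans ?_
      have hki : k ≤ (n - 1 - i) / M := by
        rw [Nat.le_div_iff_mul_le hM]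
        rw [add_one_mul] at hkM
        omega
      exact mul_le_mul_of_nonneg_right (pow_le_pow_of_le_one K.2 hK hki) hE0
    rw [hx n hn, hy n hn, hk, pow_succ', mul_assoc]
    exact ((hG n).dist_le_mul _ _).trans (by gcongr)

theorem tendsto_dist (hM : 0 < M) (hK : K < 1) (hG : ∀ n, LipschitzWith K (G n))
    (hx : IsDelaySolution G x) (hy : IsDelaySolution G y) :
    Tendsto (fun n => dist (x n) (y n)) atTop (𝓝 0) := by
  set E := ∑ m ∈ Finset.range M, dist (x m) (y m)
  have hE : ∀ m < M, dist (x m) (y m) ≤ E := fun m hm =>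
    Finset.single_le_sum (fun m _ => dist_nonneg) (Finset.mem_range.2 hm)
  have hpow : Tendsto (fun n => (K : ℝ) ^ (n / M) * E) atTop (𝓝 0) := by
    simpa using ((tendsto_pow_atTop_nhds_zero_of_lt_one K.2 hK).comp
      (Nat.tendsto_div_const_atTop hM.ne')).mul_const E
  exact squeeze_zero (fun _ => dist_nonneg) (hx.dist_le_pow_div hM hK.le hG hy hE) hpow

end IsDelaySolution

theorem Function.Periodic.eq_of_tendsto_dist [MetricSpace X] {x y : ℕ → X} {T : ℕ}
    (hx : Periodic x T) (hy : Periodic y T) (hT : 0 < T)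
    (h : Tendsto (fun n => dist (x n) (y n)) atTop (𝓝 0)) : x = y := by
  funext n
  have hshift : Tendsto (fun k : ℕ => n + k * T) atTop atTop :=
    tendsto_atTop_mono (fun k => le_add_left (Nat.le_mul_of_pos_right k hT)) tendsto_id
  have hconst : Tendsto (fun _ : ℕ => dist (x n) (y n)) atTop (𝓝 0) := by
    have hperiod : ∀ k : ℕ, dist (x (n + k * T)) (y (n + k * T)) = dist (x n) (y n) := fun k => by
      rw [← Nat.cast_id k, hx.nat_mul, hy.nat_mul]
    simpa only [comp_def, hperiod] using h.comp hshift
  exact dist_eq_zero.1 (tendsto_nhds_unique tendsto_const_nhds hconst)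

theorem exists_periodic_isDelaySolution [MetricSpace X] [CompleteSpace X] [Nonempty X]
    {G : ℕ → (Fin M → X) → X} {P : ℕ} {K : ℝ≥0} (hM : 0 < M) (hP : 0 < P) (hK : K < 1)
    (hG : ∀ n, LipschitzWith K (G n)) (hGper : Periodic G P) :
    ∃ x, IsDelaySolution G x ∧ Periodic x (P * M) := by
  let Φ : (Fin M → X) → (Fin M → X) := fun s i => delaySolution G s (P * M + i)
  have hΦ : ContractingWith (K ^ P) Φ := by
    refine ⟨pow_lt_one₀ K.2 hK hP.ne', LipschitzWith.of_dist_le_mul fun s t => ?_⟩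
    refine (dist_pi_le_iff (by positivity)).2 fun i => ?_
    have hstart : ∀ m (hm : m < M), dist (delaySolution G s m) (delaySolution G t m) ≤ dist s t :=
      fun m hm => by
        simpa only [delaySolution_of_lt _ _ hm] using dist_le_pi_dist s t ⟨m, hm⟩
    have hdiv : (P * M + i) / M = P := by
      rw [mul_comm, Nat.mul_add_div hM, Nat.div_eq_of_lt i.2, add_zero]
    simpa only [hdiv, NNReal.coe_pow] using (isDelaySolution_delaySolution G s).dist_le_pow_div
      hM hK.le hG (isDelaySolution_delaySolution G t) hstart (P * M + i)
  set s := ContractingWith.fixedPoint Φ hΦ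
  have hs : Φ s = s := hΦ.fixedPoint_isFixedPt
  have hsol := isDelaySolution_delaySolution G s
  have hGPM : Periodic G (P * M) := by simpa only [Nat.cast_id, mul_comm] using hGper.nat_mul M
  refine ⟨_, hsol, fun n => congrFun ((hsol.shift hGPM).ext hsol fun m hm => ?_) n⟩
  rw [delaySolution_of_lt _ _ hm, add_comm]
  exact congrFun hs ⟨m, hm⟩

theorem periodic_forced_converges_PM (M P : ℕ) (hM : 1 ≤ M) (hP : 1 ≤ P)
    (α : ℝ) (hα : α < 1)
    (G : ℕ → (Fin M → ℝ) → ℝ)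
    (hGper : ∀ n, G (n + P) = G n)
    (hGcon : ∀ n (u v : Fin M → ℝ), |G n u - G n v| ≤ α * ‖u - v‖) :
    ∃! xs : ℕ → ℝ,
      (∀ n, xs (n + P * M) = xs n) ∧
      (∀ x : ℕ → ℝ, (∀ n, M ≤ n → x n = G n (fun i : Fin M => x (n - 1 - (i : ℕ)))) →
        Filter.Tendsto (fun n => x n - xs n) Filter.atTop (nhds 0)) := by
  have hK : α.toNNReal < 1 := Real.toNNReal_lt_one.2 hα
  have hG : ∀ n, LipschitzWith α.toNNReal (G n) := fun n =>
    LipschitzWith.of_dist_le_mul fun u v => by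
      rw [Real.dist_eq, dist_eq_norm]
      exact (hGcon n u v).trans (by gcongr; exact Real.le_coe_toNNReal α)
  obtain ⟨xs, hsol, hper⟩ := exists_periodic_isDelaySolution hM hP hK hG hGper
  have hconv : ∀ x, IsDelaySolution G x → Tendsto (fun n => x n - xs n) atTop (𝓝 0) :=
    fun x hx => tendsto_iff_dist_tendsto_zero.2 <| by
      simpa only [dist_zero_right, Real.norm_eq_abs, ← Real.dist_eq] using
        hx.tendsto_dist hM hK hG hsol
  refine ⟨xs, ⟨hper, hconv⟩, fun ys ⟨hys, hysconv⟩ =>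
    (Periodic.eq_of_tendsto_dist hper hys (by positivity) ?_).symm⟩
  simpa only [dist_zero_right, ← dist_eq_norm] using
    tendsto_iff_dist_tendsto_zero.1 (hysconv xs hsol)
end

section
/- Let G_n : ℝ^M → ℝ be sup-contractive for each n with G_{n+P} = G_n for all n. Then for any initial condition (x₁,...,x_M), the sequence defined by x_n = G_n(x_{n-1},...,x_{n-M}) converges to a unique P-periodic orbit independent of the initial condition: there exists a sequence (x*_n) with x*_{n+P} = x*_n for all n, not depending on the initial condition, such that |x_n - x*_n| → 0. -/
/-!
Two solutions of the recurrence approach each other geometrically: by sup-contractivity the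
distance at time `n` is at most `α ^ (n / M)` times the initial distance. Hence the map sending
the initial window to the window `M * P` steps later is an `α ^ P`-contraction; its fixed point
gives an `M * P`-periodic solution. Shifting that solution by `P` yields another solution, whose
difference from it is periodic and tends to zero, so it vanishes and the solution is
`P`-periodic. Every solution converges to it, and a periodic limit is unique since a periodic
sequence tending to zero is zero.
-/

open Filter Topology

theorem Function.Periodic.eq_of_tendsto {X : Type*} [TopologicalSpace X] [T2Space X]
    {f : ℕ → X} {c : ℕ} (hf : Function.Periodic f c) (hc : 0 < c) {a : X}
    (h : Tendsto f atTop (𝓝 a)) (n : ℕ) : f n = a := by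
  have hk : Tendsto (fun k : ℕ => n + k * c) atTop atTop :=
    tendsto_atTop_mono (fun k => le_add_left (Nat.le_mul_of_pos_right k hc)) tendsto_id
  exact tendsto_nhds_unique (tendsto_const_nhds.congr fun k => (hf.nat_mul k n).symm) (h.comp hk)

theorem nonneg_of_abs_sub_le_mul_norm {E : Type*} [NormedAddCommGroup E] [Nontrivial E]
    {g : E → ℝ} {α : ℝ} (hg : ∀ u v, |g u - g v| ≤ α * ‖u - v‖) : 0 ≤ α := by
  obtain ⟨u, hu⟩ := exists_ne (0 : E)
  have h := (abs_nonneg _).trans (hg u 0)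
  rw [sub_zero] at h
  exact nonneg_of_mul_nonneg_left h (norm_pos_iff.mpr hu)

namespace DelayRecurrence

variable {M : ℕ} {β : Type*}

def IsSolution (G : ℕ → (Fin M → β) → β) (x : ℕ → β) : Prop :=
  ∀ n, M ≤ n → x n = G n (fun i : Fin M => x (n - 1 - i))

noncomputable def orbit (G : ℕ → (Fin M → β) → β) (c : Fin M → β) : ℕ → β
  | n =>
    if h : n < M then c ⟨n, h⟩
    else G n (fun i : Fin M => orbit G c (n - 1 - i))
  termination_by n => n
  decreasing_by have := i.2; omega

variable {G : ℕ → (Fin M → β) → β}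

theorem orbit_of_lt (c : Fin M → β) {n : ℕ} (h : n < M) : orbit G c n = c ⟨n, h⟩ := by
  rw [orbit, dif_pos h]

theorem isSolution_orbit (c : Fin M → β) : IsSolution G (orbit G c) := fun n h => by
  rw [orbit, dif_neg (Nat.not_lt.mpr h)]

theorem IsSolution.eq_orbit {x : ℕ → β} (hx : IsSolution G x) {c : Fin M → β}
    (hc : ∀ n (h : n < M), x n = c ⟨n, h⟩) : x = orbit G c := by
  funext n
  induction n using Nat.strong_induction_on with
  | _ n ih =>
    rcases lt_or_ge n M with h | h
    · rw [hc n h, orbit_of_lt c h]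
    · rw [hx n h, isSolution_orbit c n h]
      congr 1
      funext i
      exact ih _ (by have := i.2; omega)

theorem IsSolution.comp_add_right {x : ℕ → β} (hx : IsSolution G x) {Q : ℕ}
    (hG : Function.Periodic G Q) : IsSolution G (fun n => x (n + Q)) := fun n h => by
  show x (n + Q) = G n fun i => x (n - 1 - i + Q)
  rw [hx (n + Q) (by omega), hG]
  congr 1
  funext i
  congr 1
  have := i.2
  omega

variable {G : ℕ → (Fin M → ℝ) → ℝ} {α : ℝ}

theorem IsSolution.abs_sub_le (hM : 0 < M) (hα0 : 0 ≤ α) (hα1 : α ≤ 1)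
    (hG : ∀ n (u v : Fin M → ℝ), |G n u - G n v| ≤ α * ‖u - v‖)
    {x y : ℕ → ℝ} (hx : IsSolution G x) (hy : IsSolution G y)
    {C : ℝ} (hC0 : 0 ≤ C) (hC : ∀ i < M, |x i - y i| ≤ C) (n : ℕ) :
    |x n - y n| ≤ α ^ (n / M) * C := by
  induction n using Nat.strong_induction_on with
  | _ n ih =>
    rcases lt_or_ge n M with h | h
    · simpa [Nat.div_eq_of_lt h] using hC n h
    have hwindow : ‖(fun i : Fin M => x (n - 1 - i)) - (fun i : Fin M => y (n - 1 - i))‖ ≤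
        α ^ (n / M - 1) * C := by
      refine (pi_norm_le_iff_of_nonneg (by positivity)).mpr fun i => ?_
      have hi := i.2
      have hdiv : n / M - 1 ≤ (n - 1 - i) / M := by
        have := Nat.div_le_div_right (c := M) (show n ≤ (n - 1 - i) + M by omega)
        rw [Nat.add_div_right _ hM] at this
        exact Nat.sub_le_of_le_add this
      calc |x (n - 1 - i) - y (n - 1 - i)|
          ≤ α ^ ((n - 1 - i) / M) * C := ih _ (by omega)
        _ ≤ α ^ (n / M - 1) * C :=
            mul_le_mul_of_nonneg_right (pow_le_pow_of_le_one hα0 hα1 hdiv) hC0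
    calc |x n - y n|
        ≤ α * ‖(fun i : Fin M => x (n - 1 - i)) - (fun i : Fin M => y (n - 1 - i))‖ := by
          rw [hx n h, hy n h]; exact hG n _ _
      _ ≤ α * (α ^ (n / M - 1) * C) := by gcongr
      _ = α ^ (n / M) * C := by
          rw [← mul_assoc, ← pow_succ', Nat.sub_add_cancel ((Nat.one_le_div_iff hM).mpr h)]

theorem IsSolution.tendsto_sub (hM : 0 < M) (hα0 : 0 ≤ α) (hα : α < 1)
    (hG : ∀ n (u v : Fin M → ℝ), |G n u - G n v| ≤ α * ‖u - v‖)
    {x y : ℕ → ℝ} (hx : IsSolution G x) (hy : IsSolution G y) :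
    Tendsto (fun n => x n - y n) atTop (𝓝 0) := by
  set C := ‖fun i : Fin M => x i - y i‖
  have hC : ∀ i < M, |x i - y i| ≤ C := fun i hi =>
    norm_le_pi_norm (fun j : Fin M => x j - y j) ⟨i, hi⟩
  have hdiv : Tendsto (fun n : ℕ => n / M) atTop atTop :=
    Nat.tendsto_div_const_atTop hM.ne'
  have hbound : Tendsto (fun n : ℕ => α ^ (n / M) * C) atTop (𝓝 0) := by
    simpa using ((tendsto_pow_atTop_nhds_zero_of_lt_one hα0 hα).comp hdiv).mul_const C
  exact squeeze_zero_norm (hx.abs_sub_le hM hα0 hα.le hG hy (norm_nonneg _) hC) hbound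

theorem lipschitzWith_orbit_window (hM : 0 < M) (hα0 : 0 ≤ α) (hα1 : α ≤ 1)
    (hG : ∀ n (u v : Fin M → ℝ), |G n u - G n v| ≤ α * ‖u - v‖) (k : ℕ) :
    LipschitzWith ⟨α ^ k, pow_nonneg hα0 k⟩
      (fun c : Fin M → ℝ => fun i : Fin M => orbit G c (M * k + i)) := by
  refine LipschitzWith.of_dist_le_mul fun c c' =>
    (dist_pi_le_iff (mul_nonneg (pow_nonneg hα0 k) dist_nonneg)).mpr fun i => ?_
  have hC : ∀ j < M, |orbit G c j - orbit G c' j| ≤ dist c c' := fun j hj => by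
    rw [orbit_of_lt c hj, orbit_of_lt c' hj]
    exact dist_le_pi_dist c c' ⟨j, hj⟩
  have hk : (M * k + i) / M = k := by
    rw [Nat.mul_add_div hM, Nat.div_eq_of_lt i.2, add_zero]
  simpa [hk, Real.dist_eq] using
    (isSolution_orbit c).abs_sub_le hM hα0 hα1 hG (isSolution_orbit c') dist_nonneg hC (M * k + i)

theorem exists_periodic_isSolution (hM : 0 < M) {P : ℕ} (hP : 0 < P)
    (hα0 : 0 ≤ α) (hα : α < 1)
    (hG : ∀ n (u v : Fin M → ℝ), |G n u - G n v| ≤ α * ‖u - v‖)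
    (hGper : Function.Periodic G P) :
    ∃ xs : ℕ → ℝ, Function.Periodic xs P ∧ IsSolution G xs := by
  have hT : ContractingWith ⟨α ^ P, pow_nonneg hα0 P⟩
      (fun c : Fin M → ℝ => fun i : Fin M => orbit G c (M * P + i)) :=
    ⟨NNReal.coe_lt_coe.mp (pow_lt_one₀ hα0 hα hP.ne'),
      lipschitzWith_orbit_window hM hα0 hα.le hG P⟩
  obtain ⟨c₀, hfix⟩ : ∃ c₀, Function.IsFixedPt _ c₀ := ⟨_, hT.fixedPoint_isFixedPt⟩
  set xs := orbit G c₀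
  have hsol : IsSolution G xs := isSolution_orbit c₀
  have hMP : Function.Periodic xs (M * P) := by
    have hshift := (hsol.comp_add_right (hGper.nat_mul M)).eq_orbit (c := c₀) fun n h => by
      rw [add_comm]; exact congrFun hfix ⟨n, h⟩
    exact congrFun hshift
  have hdiff : Tendsto (fun n => xs (n + P) - xs n) atTop (𝓝 0) :=
    (hsol.comp_add_right hGper).tendsto_sub hM hα0 hα hG hsol
  have hP' : Function.Periodic xs P := fun n =>
    sub_eq_zero.mp (((hMP.add_const P).sub hMP).eq_of_tendsto (by positivity) hdiff n)
  exact ⟨xs, hP', hsol⟩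

end DelayRecurrence

open DelayRecurrence in
theorem periodic_forced_converges_P (M P : ℕ) (hM : 1 ≤ M) (hP : 1 ≤ P)
    (α : ℝ) (hα : α < 1)
    (G : ℕ → (Fin M → ℝ) → ℝ)
    (hGper : ∀ n, G (n + P) = G n)
    (hGcon : ∀ n (u v : Fin M → ℝ), |G n u - G n v| ≤ α * ‖u - v‖) :
    ∃! xs : ℕ → ℝ,
      (∀ n, xs (n + P) = xs n) ∧
      (∀ x : ℕ → ℝ, (∀ n, M ≤ n → x n = G n (fun i : Fin M => x (n - 1 - (i : ℕ)))) →
        Filter.Tendsto (fun n => x n - xs n) Filter.atTop (nhds 0)) := by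
  have : Nonempty (Fin M) := ⟨⟨0, hM⟩⟩
  have hα0 : 0 ≤ α := nonneg_of_abs_sub_le_mul_norm (hGcon 0)
  obtain ⟨xs, hxsP, hxs⟩ := exists_periodic_isSolution hM hP hα0 hα hGcon hGper
  refine ⟨xs, ⟨hxsP, fun x hx => IsSolution.tendsto_sub hM hα0 hα hGcon hx hxs⟩, ?_⟩
  rintro ys ⟨hysP, hconv⟩
  funext n
  exact (sub_eq_zero.mp ((hxsP.sub hysP).eq_of_tendsto hP (hconv xs hxs) n)).symm
end

section
/- Let f_i : ℝ → ℝ be contractions with fixed points r_i for 1 ≤ i ≤ M, and define x_n = k-rank{f₁(x_{n-1}), ..., f_M(x_{n-M})} for n > M. Then for every initial condition, lim_{n→∞} x_n = k-rank{r₁,...,r_M}. -/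
/-- The `k`-rank of a vector: its `k`-th largest entry (1-indexed, with multiplicity). -/
noncomputable def krank (M k : ℕ) (v : Fin M → ℝ) : ℝ :=
  ((List.ofFn v).insertionSort (· ≥ ·)).getD (k - 1) 0

/-!
The `k`-rank is monotone in each entry and commutes with every monotone map of `ℝ`.
Let `R` be the `k`-rank of `r`. If every argument `y i` lies within `ε` of `R`, then
`|f i (y i) - r i| ≤ α * (|r i - R| + ε)`, so `f i (y i)` lies between `φ₋ (r i)` and `φ₊ (r i)`
for `φ± t = t ± α * (|t - R| + ε)`. These maps are monotone because `α ≤ 1`, so the `k`-rank of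
the `f i (y i)` lies between `φ₋ R = R - α * ε` and `φ₊ R = R + α * ε`. Thus the error
`|x n - R|` shrinks by the factor `α` over every window of `M` steps.
-/

open Filter Topology

namespace List

variable {α : Type*} [LinearOrder α] {l : List α}

theorem SortedGE.lt_countP_of_le_getElem (hl : l.SortedGE) {j : ℕ} (hj : j < l.length) {t : α}
    (ht : t ≤ l[j]) : j < l.countP (fun a => decide (t ≤ a)) := by
  have hprefix : (l.take (j + 1)).countP (fun a => decide (t ≤ a)) = j + 1 := by
    rw [countP_eq_length.2, length_take, min_eq_left hj]
    rintro a ha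
    obtain ⟨i, hi, rfl⟩ := mem_take_iff_getElem.1 ha
    exact decide_eq_true (ht.trans (hl.getElem_ge_getElem_of_le (by omega)))
  have := (take_sublist (j + 1) l).countP_le (p := fun a => decide (t ≤ a))
  omega

theorem SortedGE.countP_le_of_getElem_lt (hl : l.SortedGE) {j : ℕ} (hj : j < l.length) {t : α}
    (ht : l[j] < t) : l.countP (fun a => decide (t ≤ a)) ≤ j := by
  have hsuffix : (l.drop j).countP (fun a => decide (t ≤ a)) = 0 := by
    rw [countP_eq_zero]
    rintro a ha
    obtain ⟨i, hi, rfl⟩ := mem_drop_iff_getElem.1 ha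
    simpa using (hl.getElem_ge_getElem_of_le (by omega)).trans_lt ht
  rw [← take_append_drop j l, countP_append, hsuffix, add_zero]
  exact countP_le_length.trans (length_take_le _ _)

theorem SortedGE.le_getElem_iff_lt_countP (hl : l.SortedGE) {j : ℕ} (hj : j < l.length) (t : α) :
    t ≤ l[j] ↔ j < l.countP (fun a => decide (t ≤ a)) :=
  ⟨hl.lt_countP_of_le_getElem hj, fun h => not_lt.1 fun ht =>
    (hl.countP_le_of_getElem_lt hj ht).not_gt h⟩

end List

theorem monotone_add_mul_abs_sub {c : ℝ} (hc : |c| ≤ 1) (R : ℝ) :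
    Monotone fun t => t + c * |t - R| := by
  intro a b hab
  have hmove : |(|a - R| - |b - R|)| ≤ b - a := by
    simpa [abs_of_nonneg (sub_nonneg.2 hab), abs_sub_comm a b] using
      abs_abs_sub_abs_le_abs_sub (a - R) (b - R)
  have hslope : c * (|a - R| - |b - R|) ≤ b - a := calc
    c * (|a - R| - |b - R|) ≤ |c| * |(|a - R| - |b - R|)| := by rw [← abs_mul]; exact le_abs_self _
    _ ≤ 1 * (b - a) := mul_le_mul hc hmove (abs_nonneg _) zero_le_one
    _ = b - a := one_mul _
  dsimp only
  linarith

section KRank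

variable {M k : ℕ}

theorem insertionSort_ofFn_comp_of_monotone {φ : ℝ → ℝ} (hφ : Monotone φ) (v : Fin M → ℝ) :
    (List.ofFn (fun i => φ (v i))).insertionSort (· ≥ ·) =
      ((List.ofFn v).insertionSort (· ≥ ·)).map φ := by
  refine List.Perm.eq_of_sortedGE List.sortedGE_insertionSort ?_ ?_
  · exact (List.sortedGE_insertionSort.pairwise.map (S := (· ≥ ·)) φ
      fun _ _ h => hφ h).sortedGE
  · have hmap := ((List.perm_insertionSort (· ≥ ·) (List.ofFn v)).map φ).symm
    rw [List.map_ofFn] at hmap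
    exact (List.perm_insertionSort _ _).trans hmap

theorem krank_comp_of_monotone (hk : k - 1 < M) {φ : ℝ → ℝ} (hφ : Monotone φ) (v : Fin M → ℝ) :
    krank M k (fun i => φ (v i)) = φ (krank M k v) := by
  have hlen : k - 1 < ((List.ofFn v).insertionSort (· ≥ ·)).length := by simpa using hk
  rw [krank, krank, insertionSort_ofFn_comp_of_monotone hφ,
    List.getD_eq_getElem _ _ (by simpa using hlen), List.getD_eq_getElem _ _ hlen,
    List.getElem_map]

theorem le_krank_iff (hk : k - 1 < M) (v : Fin M → ℝ) (t : ℝ) :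
    t ≤ krank M k v ↔ k - 1 < (List.ofFn v).countP (fun a => decide (t ≤ a)) := by
  have hlen : k - 1 < ((List.ofFn v).insertionSort (· ≥ ·)).length := by simpa using hk
  rw [krank, List.getD_eq_getElem _ _ hlen,
    List.sortedGE_insertionSort.le_getElem_iff_lt_countP hlen,
    (List.perm_insertionSort _ _).countP_eq]

theorem krank_mono : Monotone (krank M k) := by
  intro v w hvw
  by_cases hk : k - 1 < M
  · rw [le_krank_iff hk]
    refine ((le_krank_iff hk v _).1 le_rfl).trans_le ?_
    simp only [List.ofFn_eq_map, List.countP_map]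
    exact List.countP_mono_left fun i _ h => by simpa using (of_decide_eq_true h).trans (hvw i)
  · have hlen (u : Fin M → ℝ) : ((List.ofFn u).insertionSort (· ≥ ·)).length ≤ k - 1 := by
      rw [List.length_insertionSort, List.length_ofFn]; omega
    rw [krank, krank, List.getD_eq_default _ _ (hlen v), List.getD_eq_default _ _ (hlen w)]

theorem abs_krank_sub_krank_le_of_contraction (hk : k - 1 < M) {α : ℝ} (hα0 : 0 ≤ α)
    (hα1 : α ≤ 1) {f : Fin M → ℝ → ℝ} (hcon : ∀ i x y, |f i x - f i y| ≤ α * |x - y|)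
    {r : Fin M → ℝ} (hr : ∀ i, f i (r i) = r i) {y : Fin M → ℝ} {ε : ℝ}
    (hy : ∀ i, |y i - krank M k r| ≤ ε) :
    |krank M k (fun i => f i (y i)) - krank M k r| ≤ α * ε := by
  set R := krank M k r
  have hdev : ∀ i, |f i (y i) - r i| ≤ α * |r i - R| + α * ε := fun i => calc
    |f i (y i) - r i| = |f i (y i) - f i (r i)| := by rw [hr i]
    _ ≤ α * |y i - r i| := hcon i _ _
    _ ≤ α * (|r i - R| + ε) := by
      gcongr
      linarith [abs_sub_le (y i) R (r i), abs_sub_comm R (r i), hy i]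
    _ = α * |r i - R| + α * ε := mul_add _ _ _
  have hlower : R - α * ε ≤ krank M k (fun i => f i (y i)) := calc
    R - α * ε = (fun t => t + -α * |t - R| + -(α * ε)) R := by
      simp only [sub_self, abs_zero, mul_zero, add_zero, sub_eq_add_neg]
    _ = krank M k (fun i => r i + -α * |r i - R| + -(α * ε)) :=
      (krank_comp_of_monotone hk
        ((monotone_add_mul_abs_sub (by rw [abs_neg, abs_le]; constructor <;> linarith) R).add_const
          _) r).symm
    _ ≤ _ := krank_mono fun i => by linarith [(abs_le.1 (hdev i)).1]
  have hupper : krank M k (fun i => f i (y i)) ≤ R + α * ε := calc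
    _ ≤ krank M k (fun i => r i + α * |r i - R| + α * ε) :=
      krank_mono fun i => by linarith [(abs_le.1 (hdev i)).2]
    _ = (fun t => t + α * |t - R| + α * ε) R :=
      krank_comp_of_monotone hk
        ((monotone_add_mul_abs_sub (abs_le.2 ⟨by linarith, hα1⟩) R).add_const _) r
    _ = R + α * ε := by simp
  exact abs_le.2 ⟨by linarith, by linarith⟩

end KRank

theorem le_mul_pow_div_of_le_mul_window {M : ℕ} (hM : 0 < M) {c : ℝ} (hc0 : 0 ≤ c) (hc1 : c ≤ 1)
    {e : ℕ → ℝ} {B : ℝ} (hB : 0 ≤ B) (hinit : ∀ n < M, e n ≤ B)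
    (hstep : ∀ n, M ≤ n → ∀ ε, (∀ i < M, e (n - 1 - i) ≤ ε) → e n ≤ c * ε) (n : ℕ) :
    e n ≤ B * c ^ (n / M) := by
  induction n using Nat.strong_induction_on with
  | _ n ih =>
    rcases lt_or_ge n M with hn | hn
    · simpa [Nat.div_eq_of_lt hn] using hinit n hn
    · calc e n ≤ c * (B * c ^ ((n - M) / M)) := hstep n hn _ fun i hi =>
            (ih _ (by omega)).trans <| mul_le_mul_of_nonneg_left
              (pow_le_pow_of_le_one hc0 hc1 (Nat.div_le_div_right (by omega))) hB
        _ = B * c ^ (n / M) := by rw [Nat.div_eq_sub_div hM hn, pow_succ]; ring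

theorem tendsto_zero_of_le_mul_window {M : ℕ} (hM : 0 < M) {c : ℝ} (hc0 : 0 ≤ c) (hc1 : c < 1)
    {e : ℕ → ℝ} (he : ∀ n, 0 ≤ e n)
    (hstep : ∀ n, M ≤ n → ∀ ε, (∀ i < M, e (n - 1 - i) ≤ ε) → e n ≤ c * ε) :
    Tendsto e atTop (𝓝 0) := by
  set B := ∑ n ∈ Finset.range M, e n
  have hbound := le_mul_pow_div_of_le_mul_window hM hc0 hc1.le (Finset.sum_nonneg fun n _ => he n)
    (fun n hn => Finset.single_le_sum (fun j _ => he j) (Finset.mem_range.2 hn)) hstep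
  have hlim : Tendsto (fun n => B * c ^ (n / M)) atTop (𝓝 0) := by
    simpa using ((tendsto_pow_atTop_nhds_zero_of_lt_one hc0 hc1).comp
      (Nat.tendsto_div_const_atTop hM.ne')).const_mul B
  exact squeeze_zero he hbound hlim

theorem rank_type_autonomous_limit_general (M k : ℕ) (hM : 1 ≤ M) (hkM : k ≤ M)
    (α : ℝ) (hα : α < 1)
    (f : Fin M → ℝ → ℝ)
    (hcon : ∀ i (x y : ℝ), |f i x - f i y| ≤ α * |x - y|)
    (r : Fin M → ℝ) (hr : ∀ i, f i (r i) = r i)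
    (x : ℕ → ℝ)
    (hx : ∀ n, M ≤ n → x n = krank M k (fun i : Fin M => f i (x (n - 1 - (i : ℕ))))) :
    Filter.Tendsto x Filter.atTop (nhds (krank M k r)) := by
  have hα0 : 0 ≤ α := (abs_nonneg _).trans (by simpa using hcon ⟨0, hM⟩ 1 0)
  rw [tendsto_iff_norm_sub_tendsto_zero]
  refine tendsto_zero_of_le_mul_window hM hα0 hα (fun n => norm_nonneg _) fun n hn ε hε => ?_
  rw [Real.norm_eq_abs, hx n hn]
  exact abs_krank_sub_krank_le_of_contraction (by omega) hα0 hα.le hcon hr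
    fun i => by simpa using hε i i.2

theorem rank_type_autonomous_limit (M k : ℕ) (hM : 1 ≤ M) (hk1 : 1 ≤ k) (hkM : k ≤ M)
    (α : ℝ) (hα : α < 1)
    (f : Fin M → ℝ → ℝ)
    (hcon : ∀ i (x y : ℝ), |f i x - f i y| ≤ α * |x - y|)
    (r : Fin M → ℝ) (hr : ∀ i, f i (r i) = r i)
    (x : ℕ → ℝ)
    (hx : ∀ n, M ≤ n → x n = krank M k (fun i : Fin M => f i (x (n - 1 - (i : ℕ))))) :
    Filter.Tendsto x Filter.atTop (nhds (krank M k r)) :=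
  rank_type_autonomous_limit_general M k hM hkM α hα f hcon r hr x hx
end

section
/- Consider the period-two forced max-type recurrence x_{2i} = max{f₁(x_{2i-1}), f₂(x_{2i-2})}, x_{2i+1} = max{g₁(x_{2i}), g₂(x_{2i-1})} with contractions f₁, f₂, g₁, g₂. Let r₁, r₂, r₃, r₄ satisfy f₁(g₁(r₁)) = r₁, g₁(f₁(r₂)) = r₂ (with f₁(r₂) = r₁, g₁(r₁) = r₂), f₂(r₃) = r₃, g₂(r₄) = r₄. Then the sequence defined by x_{2i} = max{f₁(max{r₂,r₄}), r₃} and x_{2i+1} = max{g₁(max{r₁,r₃}), r₄} for all i is a period-two solution of the recurrence. -/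
lemma nonneg_of_abs_sub_le_mul {f : ℝ → ℝ} {α : ℝ}
    (hf : ∀ x y, |f x - f y| ≤ α * |x - y|) : 0 ≤ α := by
  have h := hf 0 1
  norm_num at h
  linarith [abs_nonneg (f 0 - f 1)]

lemma apply_le_self_of_fixed_le {f : ℝ → ℝ} {α r y : ℝ} (hα : α ≤ 1)
    (hf : ∀ x y, |f x - f y| ≤ α * |x - y|) (hr : f r = r) (hy : r ≤ y) : f y ≤ y := by
  have h := hf y r
  rw [hr, abs_of_nonneg (sub_nonneg.mpr hy)] at h
  nlinarith [le_abs_self (f y - r)]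

lemma apply_le_of_abs_sub_le {f : ℝ → ℝ} {α a b c y : ℝ} (hα₀ : 0 ≤ α) (hα : α ≤ 1)
    (hf : ∀ x y, |f x - f y| ≤ α * |x - y|) (hb : f b = a) (hac : a ≤ c)
    (hy : |y - b| ≤ α * (c - a)) : f y ≤ c := by
  have h := hf y b
  rw [hb] at h
  have hca : 0 ≤ c - a := sub_nonneg.mpr hac
  calc f y ≤ a + α * |y - b| := by linarith [le_abs_self (f y - a)]
    _ ≤ a + α * (α * (c - a)) := by gcongr
    _ ≤ a + 1 * (1 * (c - a)) := by gcongr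
    _ = c := by ring

lemma max_left_apply_max_eq {φ : ℝ → ℝ} {a r : ℝ} (hr : φ r = r)
    (hφ : φ (max a r) ≤ max a r) : max a (φ (max a r)) = max a r := by
  rcases le_total r a with h | h
  · rw [max_eq_left h] at hφ ⊢
    exact max_eq_left hφ
  · rw [max_eq_right h, hr]
    exact max_eq_right h

lemma max_eq_max_or_abs_sub_le (a b c : ℝ) :
    max a c = max b c ∨ (|max a c - b| ≤ |a - b| ∧ |max b c - b| ≤ |a - b|) := by
  rcases le_total (max a b) c with h | h
  · left
    rw [max_eq_right (le_of_max_le_left h), max_eq_right (le_of_max_le_right h)]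
  · right
    rw [le_max_iff] at h
    constructor <;> rw [abs_le] <;> constructor <;>
      rcases h with h | h <;> cases abs_cases (a - b) <;> cases max_cases a c <;>
      cases max_cases b c <;> linarith

/-- With `P = max (f (max r₂ r₄)) r₃` and `Q = max (g (max r₁ r₃)) r₄`, this is `P = max (f Q) (h P)`.
If `r₃ ≤ r₁` then `Q = max r₂ r₄`. Otherwise `g r₃` lies within `α (r₃ - r₁)` of `r₂`, so either
`Q = max r₂ r₄` again, or both `Q` and `max r₂ r₄` lie that close to `r₂`; then `f` maps them below
`r₁ + α² (r₃ - r₁) ≤ r₃`, and `P = r₃`. -/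
lemma max_apply_two_cycle_eq {f g h : ℝ → ℝ} {α : ℝ} (hα : α < 1)
    (hf : ∀ x y, |f x - f y| ≤ α * |x - y|)
    (hg : ∀ x y, |g x - g y| ≤ α * |x - y|)
    (hh : ∀ x y, |h x - h y| ≤ α * |x - y|)
    {r₁ r₂ r₃ : ℝ} (r₄ : ℝ) (h₁ : f r₂ = r₁) (h₂ : g r₁ = r₂) (h₃ : h r₃ = r₃) :
    max (f (max (g (max r₁ r₃)) r₄)) (h (max (f (max r₂ r₄)) r₃))
      = max (f (max r₂ r₄)) r₃ := by
  have hα₀ := nonneg_of_abs_sub_le_mul hf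
  have hhP : h (max (f (max r₂ r₄)) r₃) ≤ max (f (max r₂ r₄)) r₃ :=
    apply_le_self_of_fixed_le hα.le hh h₃ (le_max_right _ _)
  rcases le_total r₃ r₁ with h₁₃ | h₁₃
  · rw [max_eq_left h₁₃, h₂]
    exact max_left_apply_max_eq h₃ hhP
  rw [max_eq_right h₁₃]
  have hg₃ : |g r₃ - r₂| ≤ α * (r₃ - r₁) := by
    simpa only [h₂, abs_of_nonneg (sub_nonneg.mpr h₁₃)] using hg r₃ r₁
  rcases max_eq_max_or_abs_sub_le (g r₃) r₂ r₄ with hQ | ⟨hQ, hM⟩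
  · rw [hQ]
    exact max_left_apply_max_eq h₃ hhP
  · have hfQ := apply_le_of_abs_sub_le hα₀ hα.le hf h₁ h₁₃ (hQ.trans hg₃)
    have hfM := apply_le_of_abs_sub_le hα₀ hα.le hf h₁ h₁₃ (hM.trans hg₃)
    rw [max_eq_right hfM, h₃, max_eq_right hfQ]

theorem period_two_max_solution (f₁ f₂ g₁ g₂ : ℝ → ℝ) (α : ℝ) (hα : α < 1)
    (hf₁ : ∀ x y, |f₁ x - f₁ y| ≤ α * |x - y|)
    (hf₂ : ∀ x y, |f₂ x - f₂ y| ≤ α * |x - y|)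
    (hg₁ : ∀ x y, |g₁ x - g₁ y| ≤ α * |x - y|)
    (hg₂ : ∀ x y, |g₂ x - g₂ y| ≤ α * |x - y|)
    (r₁ r₂ r₃ r₄ : ℝ)
    (h1 : f₁ r₂ = r₁) (h2 : g₁ r₁ = r₂) (h3 : f₂ r₃ = r₃) (h4 : g₂ r₄ = r₄)
    (x : ℕ → ℝ)
    (hx : ∀ i : ℕ, x (2 * i) = max (f₁ (max r₂ r₄)) r₃ ∧
                   x (2 * i + 1) = max (g₁ (max r₁ r₃)) r₄) :
    ∀ i : ℕ, 1 ≤ i →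
      x (2 * i) = max (f₁ (x (2 * i - 1))) (f₂ (x (2 * i - 2))) ∧
      x (2 * i + 1) = max (g₁ (x (2 * i))) (g₂ (x (2 * i - 1))) := by
  intro i hi
  obtain ⟨k, rfl⟩ : ∃ k, i = k + 1 := ⟨i - 1, by omega⟩
  have hodd : 2 * (k + 1) - 1 = 2 * k + 1 := by omega
  have heven : 2 * (k + 1) - 2 = 2 * k := by omega
  rw [hodd, heven, (hx (k + 1)).1, (hx (k + 1)).2, (hx k).1, (hx k).2]
  exact ⟨(max_apply_two_cycle_eq hα hf₁ hg₁ hf₂ r₄ h1 h2 h3).symm,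
    (max_apply_two_cycle_eq hα hg₁ hf₁ hg₂ r₃ h2 h1 h4).symm⟩
end
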